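/- Recursion of partial correlation: let H be a real Hilbert space, Z a complete subspace, and y, x, w ∈ H such that y^{⊥Z}, x^{⊥Z}, w^{⊥Z} are nonzero and y^{⊥span(w)+Z} ≠ 0, x^{⊥span(w)+Z} ≠ 0 (in particular R²_{y∼w|Z} < 1 and R²_{x∼w|Z} < 1). Then R_{y∼x|span(w)+Z} = (R_{y∼x|Z} − R_{y∼w|Z}·R_{x∼w|Z})/(√(1 − R_{y∼w|Z}²)·√(1 − R_{x∼w|Z}²)). -/

import Mathlib

/-!
R²-calculus in real Hilbert spaces (Freidling & Zhao, "Optimization-based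
Sensitivity Analysis for Unmeasured Confounding using Partial Correlations").
-/

noncomputable section

open Submodule RealInnerProductSpace

variable {H : Type*} [NormedAddCommGroup H] [InnerProductSpace ℝ H]

/-- The residual `h^{⊥M} = h − P_M h` of `h` after projecting onto `M`. -/
def resid (M : Submodule ℝ H) [HasOrthogonalProjection M] (h : H) : H :=
  h - (orthogonalProjection M h : H)

/-- The marginal R²-value `R²_{y∼X} = 1 − ‖y^{⊥X}‖²/‖y‖²`. -/
def R2 (y : H) (X : Submodule ℝ H) [HasOrthogonalProjection X] : ℝ :=
  1 - ‖resid X y‖ ^ 2 / ‖y‖ ^ 2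

/-- The partial R²-value `R²_{y∼X|Z} = (R²_{y∼X+Z} − R²_{y∼Z})/(1 − R²_{y∼Z})`. -/
def R2p (y : H) (X Z : Submodule ℝ H) [HasOrthogonalProjection (X ⊔ Z)]
    [HasOrthogonalProjection Z] : ℝ :=
  (R2 y (X ⊔ Z) - R2 y Z) / (1 - R2 y Z)

/-- The partial R-value `R_{y∼x|Z} = ⟪y^{⊥Z}, x^{⊥Z}⟫/(‖y^{⊥Z}‖·‖x^{⊥Z}‖)`. -/
def Rp (y x : H) (Z : Submodule ℝ H) [HasOrthogonalProjection Z] : ℝ :=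
  ⟪resid Z y, resid Z x⟫ / (‖resid Z y‖ * ‖resid Z x‖)

/-- The partial f-value `f_{y∼x|Z} = R_{y∼x|Z}/√(1 − R²_{y∼x|Z})`. -/
def fp (y x : H) (Z : Submodule ℝ H) [HasOrthogonalProjection Z] : ℝ :=
  Rp y x Z / Real.sqrt (1 - Rp y x Z ^ 2)

/-- The regression estimand `β_{y∼d|M} = ⟪y^{⊥M}, d^{⊥M}⟫/‖d^{⊥M}‖²`. -/
def betaReg (y d : H) (M : Submodule ℝ H) [HasOrthogonalProjection M] : ℝ :=
  ⟪resid M y, resid M d⟫ / ‖resid M d‖ ^ 2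

/-- `σ_{y∼M} = ‖y^{⊥M}‖`. -/
def sigv (y : H) (M : Submodule ℝ H) [HasOrthogonalProjection M] : ℝ :=
  ‖resid M y‖

/-!
Adding `w` to `Z` is the same as adding its residual `c = w^{⊥Z}`, which is orthogonal to `Z`;
hence residualising on `span(w) + Z` means residualising on `Z` and then on the line `ℝ c`.
On a line the residual is `a - (⟪c, a⟫/‖c‖²) c`, so with `a = y^{⊥Z}`, `b = x^{⊥Z}` one gets
`⟪a', b'⟫ = ⟪a, b⟫ - ⟪a, c⟫⟪b, c⟫/‖c‖²` and `‖a'‖ = ‖a‖ √(1 - R²_{a∼c})`, and the recursion is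
this identity divided by `‖a'‖‖b'‖`.
-/

lemma resid_eq_sub_starProjection (M : Submodule ℝ H) [HasOrthogonalProjection M] (h : H) :
    resid M h = h - M.starProjection h :=
  rfl

lemma resid_mem_orthogonal (M : Submodule ℝ H) [HasOrthogonalProjection M] (h : H) :
    resid M h ∈ Mᗮ :=
  sub_starProjection_mem_orthogonal h

-- Phrased through `hM` so that `M` may carry any `HasOrthogonalProjection` instance.
lemma resid_sup_eq_resid_resid {M U Z : Submodule ℝ H} [HasOrthogonalProjection M]
    [HasOrthogonalProjection U] [HasOrthogonalProjection Z] (hM : M = U ⊔ Z) (hUZ : U ⟂ Z)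
    (h : H) : resid M h = resid U (resid Z h) := by
  subst hM
  have hPU : U.starProjection h ∈ Zᗮ := hUZ.le (coe_mem _)
  have hPZ : Z.starProjection h ∈ Uᗮ := hUZ.symm.le (coe_mem _)
  have hPM : (U ⊔ Z).starProjection h = U.starProjection h + Z.starProjection h := by
    refine eq_starProjection_of_mem_of_inner_eq_zero
      (add_mem (mem_sup_left (coe_mem _)) (mem_sup_right (coe_mem _))) ?_
    rw [← mem_orthogonal', ← inf_orthogonal, ← sub_sub]
    refine ⟨sub_mem (resid_mem_orthogonal U h) hPZ, ?_⟩
    rw [sub_right_comm]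
    exact sub_mem (resid_mem_orthogonal Z h) hPU
  rw [resid_eq_sub_starProjection, hPM, resid_eq_sub_starProjection, resid_eq_sub_starProjection,
    map_sub, (starProjection_apply_eq_zero_iff U).2 hPZ, sub_zero]
  abel

lemma span_singleton_resid_sup (Z : Submodule ℝ H) [HasOrthogonalProjection Z] (w : H) :
    (ℝ ∙ resid Z w) ⊔ Z = (ℝ ∙ w) ⊔ Z := by
  have hPZ : Z.starProjection w ∈ Z := coe_mem _
  apply le_antisymm <;> refine sup_le ?_ le_sup_right <;> rw [span_singleton_le_iff_mem]
  · exact sub_mem (mem_sup_left (mem_span_singleton_self w)) (mem_sup_right hPZ)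
  · simpa [resid_eq_sub_starProjection] using
      add_mem (mem_sup_left (mem_span_singleton_self (resid Z w))) (mem_sup_right hPZ)

lemma isOrtho_span_resid (Z : Submodule ℝ H) [HasOrthogonalProjection Z] (w : H) :
    (ℝ ∙ resid Z w) ⟂ Z :=
  isOrtho_iff_le.2 <| (span_singleton_le_iff_mem _ _).2 (resid_mem_orthogonal Z w)

def corr (a b : H) : ℝ :=
  ⟪a, b⟫ / (‖a‖ * ‖b‖)

lemma Rp_eq_corr (y x : H) (Z : Submodule ℝ H) [HasOrthogonalProjection Z] :
    Rp y x Z = corr (resid Z y) (resid Z x) :=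
  rfl

lemma resid_span_singleton (c a : H) : resid (ℝ ∙ c) a = a - (⟪c, a⟫ / ‖c‖ ^ 2) • c := by
  rw [resid_eq_sub_starProjection, starProjection_singleton]
  rfl

lemma inner_resid_span_singleton (a b c : H) :
    ⟪resid (ℝ ∙ c) a, resid (ℝ ∙ c) b⟫ = ⟪a, b⟫ - ⟪a, c⟫ * ⟪b, c⟫ / ‖c‖ ^ 2 := by
  rcases eq_or_ne c 0 with rfl | hc
  · simp [resid_eq_sub_starProjection]
  rw [resid_span_singleton, resid_span_singleton]
  simp only [inner_sub_left, inner_sub_right, inner_smul_left, inner_smul_right, conj_trivial,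
    real_inner_self_eq_norm_sq, real_inner_comm c]
  field_simp
  ring

lemma norm_resid_span_singleton (a c : H) :
    ‖resid (ℝ ∙ c) a‖ = ‖a‖ * √(1 - corr a c ^ 2) := by
  have hsq : ‖resid (ℝ ∙ c) a‖ ^ 2 = ‖a‖ ^ 2 * (1 - corr a c ^ 2) := by
    rw [← real_inner_self_eq_norm_sq, inner_resid_span_singleton, real_inner_self_eq_norm_sq, corr]
    rcases eq_or_ne a 0 with rfl | ha
    · simp
    rcases eq_or_ne c 0 with rfl | hc
    · simp
    field_simp
  rw [← Real.sqrt_sq (norm_nonneg (resid (ℝ ∙ c) a)), hsq, Real.sqrt_mul (sq_nonneg _),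
    Real.sqrt_sq (norm_nonneg a)]

-- If `a'` vanishes then so does `1 - corr a c ^ 2`, and both sides are `0` by `x / 0 = 0`.
lemma corr_resid_span_singleton (a b c : H) :
    corr (resid (ℝ ∙ c) a) (resid (ℝ ∙ c) b) =
      (corr a b - corr a c * corr b c) / (√(1 - corr a c ^ 2) * √(1 - corr b c ^ 2)) := by
  rw [corr, inner_resid_span_singleton, norm_resid_span_singleton, norm_resid_span_singleton]
  simp only [corr]
  ring

theorem partial_R_recursion_general
    (Z : Submodule ℝ H) [CompleteSpace Z] (y x w : H)
    [CompleteSpace ↥((ℝ ∙ w) ⊔ Z)] :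
    Rp y x ((ℝ ∙ w) ⊔ Z) =
      (Rp y x Z - Rp y w Z * Rp x w Z) /
        (Real.sqrt (1 - Rp y w Z ^ 2) * Real.sqrt (1 - Rp x w Z ^ 2)) := by
  have hW := (span_singleton_resid_sup Z w).symm
  rw [Rp_eq_corr, resid_sup_eq_resid_resid hW (isOrtho_span_resid Z w),
    resid_sup_eq_resid_resid hW (isOrtho_span_resid Z w)]
  exact corr_resid_span_singleton _ _ _

/-- recursion of partial correlation. -/
theorem partial_R_recursion [CompleteSpace H]
    (Z : Submodule ℝ H) [CompleteSpace Z] (y x w : H)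
    [CompleteSpace ↥((ℝ ∙ w) ⊔ Z)]
    (hy : resid Z y ≠ 0) (hx : resid Z x ≠ 0) (hw : resid Z w ≠ 0)
    (hy2 : resid ((ℝ ∙ w) ⊔ Z) y ≠ 0) (hx2 : resid ((ℝ ∙ w) ⊔ Z) x ≠ 0) :
    Rp y x ((ℝ ∙ w) ⊔ Z) =
      (Rp y x Z - Rp y w Z * Rp x w Z) /
        (Real.sqrt (1 - Rp y w Z ^ 2) * Real.sqrt (1 - Rp x w Z ^ 2)) :=
  partial_R_recursion_general Z y x w
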